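/- Theorem 1: Let G be an AMP CG over V and G' its EAMP CG with its deterministic relationships. Then the AMP independence model of G equals the AMP independence model of G' under marginalization of the error nodes: for all disjoint X, Y, Z ⊆ V, X ⊥_G Y | Z (AMP separation in G) holds if and only if X ⊥_{G'} Y | Z (AMP separation in G' with deterministic nodes) holds. -/

import Mathlib

/- Mixed graphs with directed and undirected edges. -/
structure MixedGraph (γ : Type*) where
  dir : γ → γ → Prop
  undir : γ → γ → Prop
  undir_symm : ∀ a b, undir a b → undir b a

namespace MixedGraph

variable {β : Type*} (G : MixedGraph β)

/-- Two nodes are adjacent if joined by some edge. -/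
def adj (a b : β) : Prop := G.dir a b ∨ G.dir b a ∨ G.undir a b

/-- The graph is simple: no loops and at most one edge between any pair. -/
def Simple : Prop :=
  (∀ a, ¬ G.dir a a) ∧ (∀ a, ¬ G.undir a a) ∧
  (∀ a b, G.dir a b → ¬ G.dir b a) ∧ (∀ a b, G.dir a b → ¬ G.undir a b)

/-- A semidirected cycle: a cycle whose first edge is directed and whose other
edges are directed or undirected (all pointing forwards). -/
def HasSemidirectedCycle : Prop :=
  ∃ (n : ℕ) (f : Fin (n + 2) → β),
    f 0 = f (Fin.last (n + 1)) ∧ G.dir (f 0) (f 1) ∧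
    ∀ i : Fin (n + 1), G.dir (f i.castSucc) (f i.succ) ∨ G.undir (f i.castSucc) (f i.succ)

/-- A chain graph: a simple graph with no semidirected cycle. -/
def IsChainGraph : Prop := G.Simple ∧ ¬ G.HasSemidirectedCycle

/-- A DAG: a chain graph with no undirected edges. -/
def IsDAG : Prop := G.IsChainGraph ∧ ∀ a b, ¬ G.undir a b

/-- Parents of a set of nodes. -/
def pa (X : Set β) : Set β := {v | v ∉ X ∧ ∃ x ∈ X, G.dir v x}

/-- Strict ascendants of a set of nodes (strictly descending route to the set). -/
def san (W : Set β) : Set β := {v | v ∉ W ∧ ∃ w ∈ W, Relation.TransGen G.dir v w}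

/-- B is a triplex node between A and C: A → B ← C, A → B − C, or A − B ← C. -/
def triplex (A B C : β) : Prop :=
  (G.dir A B ∧ G.dir C B) ∨ (G.dir A B ∧ G.undir B C) ∨ (G.undir A B ∧ G.dir C B)

/-- B is a non-triplex node between A and C. -/
def nontriplex (A B C : β) : Prop :=
  G.adj A B ∧ G.adj B C ∧ ¬ G.triplex A B C

/-- A route: a nonempty sequence of consecutively adjacent nodes. -/
def IsRoute (l : List β) : Prop := l ≠ [] ∧ l.Chain' G.adj

/-- A path that is open given the determined set `D` (AMP path-based semantics). -/
def AMPOpenPath (D : Set β) (l : List β) : Prop :=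
  G.IsRoute l ∧ l.Nodup ∧
  (∀ A B C, [A, B, C] <:+: l → G.triplex A B C → B ∈ D ∪ G.san D) ∧
  (∀ A B C, [A, B, C] <:+: l → G.nontriplex A B C → B ∈ D →
    (G.undir A B ∧ G.undir B C ∧ ∃ p ∈ G.pa {B}, p ∉ D))

/-- A route that is open given the determined set `D` (AMP route-based semantics). -/
def AMPOpenRoute (D : Set β) (l : List β) : Prop :=
  G.IsRoute l ∧
  (∀ A B C, [A, B, C] <:+: l → G.triplex A B C → B ∈ D) ∧
  (∀ A B C, [A, B, C] <:+: l → G.nontriplex A B C → B ∉ D)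

/-- AMP separation (path-based) of X and Y given determined set D. -/
def AMPSep (D X Y : Set β) : Prop :=
  ∀ (l : List β) (x y : β), x ∈ X → y ∈ Y → l.head? = some x → l.getLast? = some y →
    ¬ G.AMPOpenPath D l

/-- AMP separation (route-based) of X and Y given determined set D. -/
def AMPSepRoute (D X Y : Set β) : Prop :=
  ∀ (l : List β) (x y : β), x ∈ X → y ∈ Y → l.head? = some x → l.getLast? = some y →
    ¬ G.AMPOpenRoute D l

/-- `s` is a collider section of the route `l`: a maximal undirected subroute of `l`
entered by arrowheads at both ends. -/
def IsColliderSection (l s : List β) : Prop :=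
  s ≠ [] ∧ List.Chain' G.undir s ∧
  ∃ pre post A C, l = pre ++ s ++ post ∧
    pre.getLast? = some A ∧ post.head? = some C ∧
    (∀ b, s.head? = some b → G.dir A b) ∧ (∀ b, s.getLast? = some b → G.dir C b) ∧
    (∀ a b, pre.getLast? = some a → s.head? = some b → ¬ G.undir a b) ∧
    (∀ a b, s.getLast? = some a → post.head? = some b → ¬ G.undir a b)

/-- `s` is a non-collider section of the route `l`: a maximal undirected subroute of `l`
not entered by arrowheads at both ends. -/
def IsNonColliderSection (l s : List β) : Prop :=
  s ≠ [] ∧ List.Chain' G.undir s ∧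
  ∃ pre post, l = pre ++ s ++ post ∧
    (∀ a b, pre.getLast? = some a → s.head? = some b → ¬ G.undir a b) ∧
    (∀ a b, s.getLast? = some a → post.head? = some b → ¬ G.undir a b) ∧
    ¬ ((∃ A, pre.getLast? = some A ∧ ∀ b, s.head? = some b → G.dir A b) ∧
       (∃ C, post.head? = some C ∧ ∀ b, s.getLast? = some b → G.dir C b))

/-- A route that is open given the determined set `D` (LWF semantics). -/
def LWFOpenRoute (D : Set β) (l : List β) : Prop :=
  G.IsRoute l ∧
  (∀ s, G.IsColliderSection l s → ∃ x ∈ s, x ∈ D) ∧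
  (∀ s, G.IsNonColliderSection l s → ∀ x ∈ s, x ∉ D)

/-- LWF separation of X and Y given determined set D. -/
def LWFSep (D X Y : Set β) : Prop :=
  ∀ (l : List β) (x y : β), x ∈ X → y ∈ Y → l.head? = some x → l.getLast? = some y →
    ¬ G.LWFOpenRoute D l

/-- Closure of Z under a set `det` of deterministic relationships: `(S, a) ∈ det`
means that `a` is a function of `S`. -/
inductive Determined (det : Set (Set β × β)) (Z : Set β) : β → Prop
  | base : ∀ a, a ∈ Z → Determined det Z a
  | step : ∀ (S : Set β) (a : β), (S, a) ∈ det → (∀ b ∈ S, Determined det Z b) →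
      Determined det Z a

/-- The set D(Z) of nodes determined by Z. -/
def DSet (det : Set (Set β × β)) (Z : Set β) : Set β := {a | Determined det Z a}

end MixedGraph

section EAMP

variable {α : Type*}

/-- Directed edges of the EAMP CG: `inl` nodes are the original nodes,
`inr` nodes are the error nodes. -/
def eampDir (G : MixedGraph α) : (α ⊕ α) → (α ⊕ α) → Prop
  | Sum.inl x, Sum.inl y => G.dir x y
  | Sum.inr x, Sum.inl y => x = y
  | _, _ => False

/-- Undirected edges of the EAMP CG: `ε^A − ε^B` for each `A − B` of G. -/
def eampUndir (G : MixedGraph α) : (α ⊕ α) → (α ⊕ α) → Prop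
  | Sum.inr x, Sum.inr y => G.undir x y
  | _, _ => False

/-- The EAMP CG G' of an AMP CG G: add `ε^A → A` for each node A and replace
each undirected edge `A − B` by `ε^A − ε^B`. -/
def eamp (G : MixedGraph α) : MixedGraph (α ⊕ α) where
  dir := eampDir G
  undir := eampUndir G
  undir_symm := by
    rintro (x | x) (y | y) h <;>
      simp only [eampUndir] at h ⊢ <;>
      first
        | exact h.elim
        | exact G.undir_symm _ _ h

/-- The parents of A in G, embedded as nodes of the EAMP CG. -/
def eampPa (G : MixedGraph α) (A : α) : Set (α ⊕ α) := {x | ∃ B, G.dir B A ∧ x = Sum.inl B}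

/-- The deterministic relationships of the EAMP CG: each A is a function of
`pa_G(A) ∪ {ε^A}`, and each `ε^A` is a function of `pa_G(A) ∪ {A}`. -/
def eampDet (G : MixedGraph α) : Set (Set (α ⊕ α) × (α ⊕ α)) :=
  {p | (∃ A, p = (eampPa G A ∪ {Sum.inr A}, Sum.inl A)) ∨
       (∃ A, p = (eampPa G A ∪ {Sum.inl A}, Sum.inr A))}

/-- Marginalize the node B out of G: add `A → C` for every pair `A → B`, `B → C`,
then delete B together with all edges it participates in. -/
def marg {β : Type*} (G : MixedGraph β) (B : β) : MixedGraph β where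
  dir a c := a ≠ B ∧ c ≠ B ∧ (G.dir a c ∨ (G.dir a B ∧ G.dir B c))
  undir a c := a ≠ B ∧ c ≠ B ∧ G.undir a c
  undir_symm := by
    rintro a c ⟨h1, h2, h3⟩
    exact ⟨h2, h1, G.undir_symm _ _ h3⟩

/-- Marginalize a list of nodes out of G, one at a time. -/
def margList {β : Type*} (G : MixedGraph β) (L : List β) : MixedGraph β := L.foldl marg G

/-- Directed edges of the DAG G'': those of G' among `V ∪ ε`, plus
`ε^A → S_{ε^Aε^B} ← ε^B` for each undirected edge `ε^A − ε^B` of G'. -/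
def dagDir (G : MixedGraph α) : ((α ⊕ α) ⊕ Sym2 α) → ((α ⊕ α) ⊕ Sym2 α) → Prop
  | Sum.inl x, Sum.inl y => (eamp G).dir x y
  | Sum.inl (Sum.inr x), Sum.inr s => ∃ y, G.undir x y ∧ s = s(x, y)
  | _, _ => False

/-- The DAG G'' obtained from G' by replacing each `ε^A − ε^B` with
`ε^A → S_{ε^Aε^B} ← ε^B`, where the selection nodes are fresh. -/
def dagOf (G : MixedGraph α) : MixedGraph ((α ⊕ α) ⊕ Sym2 α) where
  dir := dagDir G
  undir _ _ := False
  undir_symm := by intro a b h; exact h.elim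

/-- The set S of selection nodes of G''. -/
def selNodes (G : MixedGraph α) : Set ((α ⊕ α) ⊕ Sym2 α) :=
  {v | ∃ x y, G.undir x y ∧ v = Sum.inr s(x, y)}

/-- The deterministic relationships of G'' (the same as those of G'). -/
def dagDet (G : MixedGraph α) : Set (Set ((α ⊕ α) ⊕ Sym2 α) × ((α ⊕ α) ⊕ Sym2 α)) :=
  {p | ∃ q ∈ eampDet G, p = (Sum.inl '' q.1, Sum.inl q.2)}

/-- Structural characterization of EAMP CGs over `W ∪ ε`: a chain graph whose
undirected edges join only error nodes and whose error nodes have no incoming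
directed edges. -/
def IsEAMPStruct (G : MixedGraph (α ⊕ α)) : Prop :=
  G.IsChainGraph ∧
  (∀ a b, G.undir a b → (∃ x, a = Sum.inr x) ∧ ∃ y, b = Sum.inr y) ∧
  (∀ a x, ¬ G.dir a (Sum.inr x))

/-- K is a connectivity component: a maximal set connected by undirected paths. -/
def IsConnComp {β : Type*} (G : MixedGraph β) (K : Set β) : Prop :=
  ∃ a, K = {b | Relation.ReflTransGen G.undir a b}

end EAMP

/-!
An open path of `G'` between nodes of `V` collapses to an open walk of `G` by merging each
consecutive pair `A, ε^A` into `A`: the directed edges among `V` are the same, an undirected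
stretch `A ← ε^A − ⋯ − ε^C → C` becomes `A − ⋯ − C`, colliders correspond to colliders, and
`ε^B` is determined exactly when `B` and all its parents are in `Z`, which is what the AMP
condition forbids for an undirected non-collider `B ∈ Z`. Conversely an open path of `G` with
ends outside `Z` lifts to an open path of `G'` by routing each undirected stretch through the
error nodes; none of them is determined. Finally, in a chain graph an open walk shortens to an
open path with the same ends: cutting out a loop `B ⋯ B` keeps the walk open, because an arrow
into `B` leads forwards along the loop to a collider, the loop not being a directed cycle.
-/

namespace List

variable {β : Type*}

theorem exists_eq_append_cons_append_cons_of_not_nodup {l : List β} (h : ¬ l.Nodup) :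
    ∃ B p q r, l = p ++ B :: q ++ B :: r := by
  induction l with
  | nil => simp at h
  | cons a t ih =>
    by_cases ha : a ∈ t
    · obtain ⟨q, r, rfl⟩ := append_of_mem ha
      exact ⟨a, [], q, r, rfl⟩
    · obtain ⟨B, p, q, r, rfl⟩ := ih fun hn => h (nodup_cons.2 ⟨ha, hn⟩)
      exact ⟨B, a :: p, q, r, rfl⟩

theorem infix_append_cons_of_three {p r : List β} {A B X C : β}
    (h : [A, X, C] <:+: p ++ B :: r) :
    [A, X, C] <:+: p ++ [B] ∨ [A, X, C] <:+: B :: r ∨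
      (p.getLast? = some A ∧ X = B ∧ r.head? = some C) := by
  induction p with
  | nil => exact Or.inr (Or.inl h)
  | cons a p ih =>
    rcases infix_cons_iff.1 h with h | h
    · rcases p with _ | ⟨y, _ | ⟨z, p⟩⟩
      · obtain ⟨rfl, rfl, t, rfl⟩ : A = a ∧ X = B ∧ [C] <+: r := by simpa using h
        simp
      · obtain ⟨rfl, rfl, rfl⟩ : A = a ∧ X = y ∧ C = B := by simpa using h
        simp
      · obtain ⟨rfl, rfl, rfl⟩ : A = a ∧ X = y ∧ C = z := by simpa using h
        exact Or.inl ⟨[], p ++ [B], by simp⟩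
    · rcases ih h with h | h | ⟨hA, hX, hC⟩
      · exact Or.inl (infix_cons h)
      · exact Or.inr (Or.inl h)
      · refine Or.inr (Or.inr ⟨?_, hX, hC⟩)
        cases p with
        | nil => simp at hA
        | cons => simpa using hA

theorem head?_eq_or_exists_infix_cons {l : List β} {a b : β}
    (h : [a, b] <:+: l) : l.head? = some a ∨ ∃ w, [w, a, b] <:+: l := by
  obtain ⟨s, t, rfl⟩ := h
  rcases s.eq_nil_or_concat with rfl | ⟨s, w, rfl⟩
  · simp
  · exact Or.inr ⟨w, s, t, by simp⟩

end List

namespace MixedGraph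

open Relation

variable {β : Type*} {H : MixedGraph β} {D : Set β}

theorem adj.symm {a b : β} (h : H.adj a b) : H.adj b a := by
  rcases h with h | h | h
  exacts [Or.inr (Or.inl h), Or.inl h, Or.inr (Or.inr (H.undir_symm _ _ h))]

theorem Simple.not_dir_of_undir (hS : H.Simple) {a b : β} (h : H.undir a b) :
    ¬ H.dir a b ∧ ¬ H.dir b a :=
  ⟨fun hd => hS.2.2.2 _ _ hd h, fun hd => hS.2.2.2 _ _ hd (H.undir_symm _ _ h)⟩

theorem Simple.not_undir_of_dir (hS : H.Simple) {a b : β} (h : H.dir a b ∨ H.dir b a) :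
    ¬ H.undir a b := fun hu => h.elim (hS.not_dir_of_undir hu).1 (hS.not_dir_of_undir hu).2

theorem triplex.symm {A B C : β} (h : H.triplex A B C) : H.triplex C B A := by
  rcases h with ⟨h1, h2⟩ | ⟨h1, h2⟩ | ⟨h1, h2⟩
  · exact Or.inl ⟨h2, h1⟩
  · exact Or.inr (Or.inr ⟨H.undir_symm _ _ h2, h1⟩)
  · exact Or.inr (Or.inl ⟨h2, H.undir_symm _ _ h1⟩)

theorem nontriplex.symm {A B C : β} (h : H.nontriplex A B C) : H.nontriplex C B A :=
  ⟨h.2.1.symm, h.1.symm, fun ht => h.2.2 ht.symm⟩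

theorem Simple.not_triplex_of_dir_out (hS : H.Simple) {A B C : β}
    (h : H.dir B A ∨ H.dir B C) : ¬ H.triplex A B C := by
  rintro (⟨h1, h2⟩ | ⟨h1, h2⟩ | ⟨h1, h2⟩) <;> rcases h with h | h
  · exact hS.2.2.1 _ _ h1 h
  · exact hS.2.2.1 _ _ h2 h
  · exact hS.2.2.1 _ _ h1 h
  · exact hS.2.2.2 _ _ h h2
  · exact hS.2.2.2 _ _ h (H.undir_symm _ _ h1)
  · exact hS.2.2.1 _ _ h2 h

variable (H) in
def TripleOpen (D : Set β) (A B C : β) : Prop :=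
  (H.triplex A B C → B ∈ D ∪ H.san D) ∧
  (H.nontriplex A B C → B ∈ D → H.undir A B ∧ H.undir B C ∧ ∃ p ∈ H.pa {B}, p ∉ D)

theorem TripleOpen.symm {A B C : β} (h : H.TripleOpen D A B C) : H.TripleOpen D C B A :=
  ⟨fun ht => h.1 ht.symm, fun hn hB =>
    let ⟨h₁, h₂, hp⟩ := h.2 hn.symm hB
    ⟨H.undir_symm _ _ h₂, H.undir_symm _ _ h₁, hp⟩⟩

theorem tripleOpen_of_not_triplex_of_notMem {A B C : β} (ht : ¬ H.triplex A B C) (hB : B ∉ D) :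
    H.TripleOpen D A B C :=
  ⟨fun h => absurd h ht, fun _ h => absurd h hB⟩

variable (H) in
def TriplesOpen (D : Set β) (l : List β) : Prop :=
  ∀ A B C, [A, B, C] <:+: l → H.TripleOpen D A B C

theorem triplesOpen_cons_cons_cons {a b c : β} {l : List β} :
    H.TriplesOpen D (a :: b :: c :: l) ↔
      H.TripleOpen D a b c ∧ H.TriplesOpen D (b :: c :: l) := by
  refine ⟨fun h => ⟨h a b c ⟨[], l, rfl⟩, fun A B C h' => h A B C (List.infix_cons h')⟩, ?_⟩
  rintro ⟨habc, h⟩ A B C h'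
  rcases List.infix_cons_iff.1 h' with h' | h'
  · obtain ⟨rfl, rfl, rfl⟩ : A = a ∧ B = b ∧ C = c := by simpa using h'
    exact habc
  · exact h A B C h'

theorem triplesOpen_of_length_le_two {l : List β} (hl : l.length ≤ 2) : H.TriplesOpen D l :=
  fun _ _ _ h => by
    have := h.length_le
    simp only [List.length_cons, List.length_nil] at this
    omega

variable (H) in
def OpenWalk (D : Set β) (l : List β) : Prop :=
  l.IsChain H.adj ∧ H.TriplesOpen D l

theorem ampOpenPath_iff {l : List β} :
    H.AMPOpenPath D l ↔ l ≠ [] ∧ l.Nodup ∧ H.OpenWalk D l := by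
  simp only [AMPOpenPath, IsRoute, OpenWalk, TriplesOpen, TripleOpen, imp_and, forall_and]
  exact ⟨fun ⟨⟨hne, hc⟩, hnd, ht, hn⟩ => ⟨hne, hnd, hc, ht, hn⟩,
    fun ⟨hne, hnd, hc, ht, hn⟩ => ⟨⟨hne, hc⟩, hnd, ht, hn⟩⟩

section OpenWalk

variable {l : List β}

theorem OpenWalk.adj (hw : H.OpenWalk D l) {a b : β} (h : [a, b] <:+: l) : H.adj a b := by
  simpa using hw.1.infix h

theorem OpenWalk.adj₃ (hw : H.OpenWalk D l) {a b c : β} (h : [a, b, c] <:+: l) :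
    H.adj a b ∧ H.adj b c := by
  simpa using hw.1.infix h

theorem OpenWalk.reverse (hw : H.OpenWalk D l) : H.OpenWalk D l.reverse := by
  refine ⟨List.isChain_reverse.2 (hw.1.imp fun _ _ h => h.symm), fun A B C h => ?_⟩
  exact (hw.2 C B A (by simpa using List.reverse_infix.2 h)).symm

theorem OpenWalk.notMem_of_dir_out (hS : H.Simple) (hw : H.OpenWalk D l) {A B C : β}
    (h : [A, B, C] <:+: l) (hd : H.dir B A ∨ H.dir B C) : B ∉ D := by
  intro hB
  obtain ⟨hu₁, hu₂, -⟩ :=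
    (hw.2 A B C h).2 ⟨(hw.adj₃ h).1, (hw.adj₃ h).2, hS.not_triplex_of_dir_out hd⟩ hB
  rcases hd with hd | hd
  exacts [(hS.not_dir_of_undir hu₁).2 hd, (hS.not_dir_of_undir hu₂).1 hd]

end OpenWalk

theorem IsChainGraph.not_transGen_dir_self (hH : H.IsChainGraph) (a : β) :
    ¬ TransGen H.dir a a := by
  intro h
  obtain ⟨b, hab, hba⟩ := TransGen.head'_iff.1 h
  obtain ⟨l, hl, hlast⟩ := List.exists_isChain_cons_of_relationReflTransGen hba
  have hcyc : (a :: b :: l).IsChain H.dir := hl.cons_cons hab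
  refine hH.2 ⟨l.length, fun i => (a :: b :: l)[i.val]'(by simp; omega), ?_, hab,
    fun i => Or.inl (hcyc.getElem i.val (by simp; omega))⟩
  simp only [Fin.val_zero, List.getElem_cons_zero, Fin.val_last]
  rw [← hlast, List.getLast_eq_getElem]
  simp

theorem mem_union_san_of_transGen {B c : β} (h : TransGen H.dir B c) (hc : c ∈ D ∪ H.san D) :
    B ∈ D ∪ H.san D := by
  by_cases hB : B ∈ D
  · exact Or.inl hB
  rcases hc with hc | ⟨-, w, hw, hcw⟩
  exacts [Or.inr ⟨hB, c, hc, h⟩, Or.inr ⟨hB, w, hw, h.trans hcw⟩]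

/-- The first node after `v` at which the walk stops following arrows forwards is a collider. -/
theorem OpenWalk.forall_transGen_or_mem_of_dir {s r : List β} {v c : β}
    (hw : H.OpenWalk D (s ++ v :: c :: r)) (hvc : H.dir v c) :
    (∀ d ∈ c :: r, TransGen H.dir v d) ∨ v ∈ D ∪ H.san D := by
  induction r generalizing s v c with
  | nil => exact Or.inl (by simpa using TransGen.single hvc)
  | cons d r ih =>
    have h3 : [v, c, d] <:+: s ++ v :: c :: d :: r := ⟨s, r, by simp⟩
    have hcollider : H.triplex v c d → v ∈ D ∪ H.san D := fun ht =>
      mem_union_san_of_transGen (TransGen.single hvc) ((hw.2 v c d h3).1 ht)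
    rcases (hw.adj₃ h3).2 with hcd | hdc | hcd
    · rcases ih (s := s ++ [v]) (by simpa using hw) hcd with h | h
      · refine Or.inl fun e he => ?_
        rcases List.mem_cons.1 he with rfl | he
        exacts [TransGen.single hvc, TransGen.head hvc (h e he)]
      · exact Or.inr (mem_union_san_of_transGen (TransGen.single hvc) h)
    · exact Or.inr (hcollider (Or.inl ⟨hvc, hdc⟩))
    · exact Or.inr (hcollider (Or.inr (Or.inl ⟨hvc, hcd⟩)))

section Splice

variable {p q r : List β} {A B C : β}

theorem OpenWalk.exists_cons_of_splice (hS : H.Simple)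
    (hw : H.OpenWalk D (p ++ B :: q ++ B :: r)) :
    ∃ c q' d, q = c :: q' ∧ [B, c, d] <:+: B :: q ++ B :: r := by
  rcases q with _ | ⟨c, _ | ⟨d, q⟩⟩
  · rcases hw.adj (show [B, B] <:+: p ++ B :: [] ++ B :: r from ⟨p, r, by simp⟩) with h | h | h
    exacts [(hS.1 _ h).elim, (hS.1 _ h).elim, (hS.2.1 _ h).elim]
  · exact ⟨c, [], B, rfl, ⟨[], r, by simp⟩⟩
  · exact ⟨c, d :: q, d, rfl, ⟨[], q ++ B :: r, by simp⟩⟩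

theorem OpenWalk.reverse_splice (hw : H.OpenWalk D (p ++ B :: q ++ B :: r)) :
    H.OpenWalk D (r.reverse ++ B :: q.reverse ++ B :: p.reverse) := by
  simpa using hw.reverse

/-- An arrow into the junction of a loop `B … B` makes `B` a collider or an ancestor of one,
since the loop cannot be a directed cycle. -/
theorem OpenWalk.mem_of_dir_splice (hH : H.IsChainGraph)
    (hw : H.OpenWalk D (p ++ B :: q ++ B :: r)) (hA : p.getLast? = some A) (hAB : H.dir A B) :
    B ∈ D ∪ H.san D := by
  obtain ⟨c, q, -, rfl, -⟩ := hw.exists_cons_of_splice hH.1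
  obtain ⟨p, rfl⟩ := List.getLast?_eq_some_iff.1 hA
  have h3 : [A, B, c] <:+: p ++ [A] ++ B :: c :: q ++ B :: r := ⟨p, q ++ B :: r, by simp⟩
  by_cases ht : H.triplex A B c
  · exact (hw.2 _ _ _ h3).1 ht
  have hBc : H.dir B c := by
    rcases (hw.adj₃ h3).2 with h | h | h
    · exact h
    · exact absurd (Or.inl ⟨hAB, h⟩) ht
    · exact absurd (Or.inr (Or.inl ⟨hAB, h⟩)) ht
  rcases OpenWalk.forall_transGen_or_mem_of_dir (s := p ++ [A]) (r := q ++ B :: r)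
    (by simpa using hw) hBc with h | h
  · exact (hH.not_transGen_dir_self B (h B (by simp))).elim
  · exact h

theorem OpenWalk.not_dir_of_splice (hS : H.Simple)
    (hw : H.OpenWalk D (p ++ B :: q ++ B :: r)) (hA : p.getLast? = some A) (hB : B ∈ D) :
    ¬ H.dir B A := by
  obtain ⟨c, q, -, rfl, -⟩ := hw.exists_cons_of_splice hS
  obtain ⟨p, rfl⟩ := List.getLast?_eq_some_iff.1 hA
  exact fun hBA => hw.notMem_of_dir_out hS (C := c) ⟨p, q ++ B :: r, by simp⟩ (Or.inl hBA) hB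

theorem OpenWalk.exists_parent_of_splice (hS : H.Simple)
    (hw : H.OpenWalk D (p ++ B :: q ++ B :: r)) (hA : p.getLast? = some A) (hB : B ∈ D)
    (hAB : H.undir A B) : ∃ x ∈ H.pa {B}, x ∉ D := by
  obtain ⟨c, q, d, rfl, hcd⟩ := hw.exists_cons_of_splice hS
  obtain ⟨p, rfl⟩ := List.getLast?_eq_some_iff.1 hA
  have h3 : [A, B, c] <:+: p ++ [A] ++ B :: c :: q ++ B :: r := ⟨p, q ++ B :: r, by simp⟩
  have h3' : [B, c, d] <:+: p ++ [A] ++ B :: c :: q ++ B :: r :=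
    hcd.trans ⟨p ++ [A], [], by simp⟩
  rcases (hw.adj₃ h3).2 with h | h | h
  · exact (hw.notMem_of_dir_out hS h3 (Or.inr h) hB).elim
  · refine ⟨c, ⟨fun hc => hS.1 B ?_, B, rfl, h⟩, hw.notMem_of_dir_out hS h3' (Or.inl h)⟩
    rwa [Set.mem_singleton_iff.1 hc] at h
  · refine ((hw.2 A B c h3).2 ⟨(hw.adj₃ h3).1, (hw.adj₃ h3).2, ?_⟩ hB).2.2
    rintro (⟨h₁, -⟩ | ⟨h₁, -⟩ | ⟨-, h₂⟩)
    exacts [(hS.not_dir_of_undir hAB).1 h₁, (hS.not_dir_of_undir hAB).1 h₁,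
      (hS.not_dir_of_undir h).2 h₂]

theorem OpenWalk.tripleOpen_splice (hH : H.IsChainGraph)
    (hw : H.OpenWalk D (p ++ B :: q ++ B :: r)) (hA : p.getLast? = some A)
    (hC : r.head? = some C) : H.TripleOpen D A B C := by
  have hC' : r.reverse.getLast? = some C := by simpa using hC
  refine ⟨fun ht => ?_, fun hn hB => ?_⟩
  · rcases ht with ⟨hAB, -⟩ | ⟨hAB, -⟩ | ⟨-, hCB⟩
    · exact hw.mem_of_dir_splice hH hA hAB
    · exact hw.mem_of_dir_splice hH hA hAB
    · exact hw.reverse_splice.mem_of_dir_splice hH hC' hCB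
  have hBA := hw.not_dir_of_splice hH.1 hA hB
  have hBC := hw.reverse_splice.not_dir_of_splice hH.1 hC' hB
  have hAB : H.undir A B := by
    rcases hn.1 with h | h | h
    · rcases hn.2.1 with h' | h' | h'
      exacts [(hBC h').elim, (hn.2.2 (Or.inl ⟨h, h'⟩)).elim,
        (hn.2.2 (Or.inr (Or.inl ⟨h, h'⟩))).elim]
    · exact (hBA h).elim
    · exact h
  have hBC' : H.undir B C := by
    rcases hn.2.1 with h | h | h
    · exact (hBC h).elim
    · exact (hn.2.2 (Or.inr (Or.inr ⟨hAB, h⟩))).elim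
    · exact h
  exact ⟨hAB, hBC', hw.exists_parent_of_splice hH.1 hA hB hAB⟩

theorem OpenWalk.splice (hH : H.IsChainGraph) (hw : H.OpenWalk D (p ++ B :: q ++ B :: r)) :
    H.OpenWalk D (p ++ B :: r) := by
  have hpre : p ++ [B] <:+: p ++ B :: q ++ B :: r := ⟨[], q ++ B :: r, by simp⟩
  have hsuf : B :: r <:+: p ++ B :: q ++ B :: r := ⟨p ++ B :: q, [], by simp⟩
  refine ⟨by simpa using (hw.1.infix hpre).append_overlap (hw.1.infix hsuf) (by simp), ?_⟩
  intro X Y Z h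
  rcases List.infix_append_cons_of_three h with h | h | ⟨hX, rfl, hZ⟩
  · exact hw.2 X Y Z (h.trans hpre)
  · exact hw.2 X Y Z (h.trans hsuf)
  · exact hw.tripleOpen_splice hH hX hZ

end Splice

theorem OpenWalk.exists_nodup (hH : H.IsChainGraph) {l : List β} (hw : H.OpenWalk D l) :
    ∃ l', l'.Nodup ∧ H.OpenWalk D l' ∧ l'.head? = l.head? ∧ l'.getLast? = l.getLast? := by
  induction hl : l.length using Nat.strong_induction_on generalizing l with
  | _ n ih =>
  by_cases hnd : l.Nodup
  · exact ⟨l, hnd, hw, rfl, rfl⟩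
  obtain ⟨B, p, q, r, rfl⟩ := List.exists_eq_append_cons_append_cons_of_not_nodup hnd
  obtain ⟨l', hnd', hw', hhead, hlast⟩ :=
    ih _ (by simp only [← hl, List.length_append, List.length_cons]; omega) (hw.splice hH) rfl
  refine ⟨l', hnd', hw', ?_, ?_⟩
  · rw [hhead]; cases p <;> simp
  · rw [hlast]; simp [List.getLast?_cons, List.getLast?_append]

end MixedGraph

section EAMP

open MixedGraph Sum Relation

variable {α : Type*} {G : MixedGraph α} {Z : Set α}

@[simp] theorem eamp_dir_inl_inl {a b : α} : (eamp G).dir (inl a) (inl b) ↔ G.dir a b := Iff.rfl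
@[simp] theorem eamp_dir_inr_inl {a b : α} : (eamp G).dir (inr a) (inl b) ↔ a = b := Iff.rfl
@[simp] theorem eamp_not_dir_inr (v : α ⊕ α) (b : α) : ¬ (eamp G).dir v (inr b) := by
  rcases v with _ | _ <;> exact id
@[simp] theorem eamp_undir_inr_inr {a b : α} : (eamp G).undir (inr a) (inr b) ↔ G.undir a b :=
  Iff.rfl
@[simp] theorem eamp_not_undir_inl_left (a : α) (v : α ⊕ α) : ¬ (eamp G).undir (inl a) v := by
  rcases v with _ | _ <;> exact id
@[simp] theorem eamp_not_undir_inl_right (v : α ⊕ α) (b : α) : ¬ (eamp G).undir v (inl b) := by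
  rcases v with _ | _ <;> exact id

/-- `A` is only determined through `ε^A`, which is only determined through `A`, so `A` is
determined exactly when it lies in `Z`. -/
theorem mem_DSet_eampDet {v : α ⊕ α} :
    v ∈ DSet (eampDet G) (inl '' Z) ↔
      Sum.elim (· ∈ Z) (fun a => a ∈ Z ∧ ∀ b, G.dir b a → b ∈ Z) v := by
  constructor
  · intro h
    induction h with
    | base a ha =>
      obtain ⟨z, hz, rfl⟩ := ha
      exact hz
    | step S a hmem _ ih =>
      rcases hmem with ⟨A, h⟩ | ⟨A, h⟩ <;> obtain ⟨rfl, rfl⟩ := Prod.mk.inj h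
      · exact (ih (inr A) (Or.inr rfl)).1
      · exact ⟨ih (inl A) (Or.inr rfl), fun b hb => ih (inl b) (Or.inl ⟨b, hb, rfl⟩)⟩
  · intro h
    rcases v with a | a
    · exact Determined.base _ ⟨a, h, rfl⟩
    · refine Determined.step _ _ (Or.inr ⟨a, rfl⟩) ?_
      rintro _ (⟨b, hb, rfl⟩ | rfl)
      exacts [Determined.base _ ⟨b, h.2 b hb, rfl⟩, Determined.base _ ⟨a, h.1, rfl⟩]

theorem inl_mem_DSet_eampDet {a : α} : inl a ∈ DSet (eampDet G) (inl '' Z) ↔ a ∈ Z :=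
  mem_DSet_eampDet

theorem inr_mem_DSet_eampDet {a : α} :
    inr a ∈ DSet (eampDet G) (inl '' Z) ↔ a ∈ Z ∧ ∀ b, G.dir b a → b ∈ Z :=
  mem_DSet_eampDet

theorem eamp_transGen_dir_inl {a : α} {v : α ⊕ α} (h : TransGen (eamp G).dir (inl a) v) :
    ∃ b, v = inl b ∧ TransGen G.dir a b := by
  induction h with
  | @single v h =>
    rcases v with b | b
    exacts [⟨b, rfl, .single h⟩, (eamp_not_dir_inr _ _ h).elim]
  | @tail v w _ h ih =>
    obtain ⟨b, rfl, hab⟩ := ih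
    rcases w with c | c
    exacts [⟨c, rfl, hab.tail h⟩, (eamp_not_dir_inr _ _ h).elim]

theorem inl_mem_union_san_eamp {a : α} :
    inl a ∈ DSet (eampDet G) (inl '' Z) ∪ (eamp G).san (DSet (eampDet G) (inl '' Z)) ↔
      a ∈ Z ∪ G.san Z := by
  simp only [Set.mem_union, inl_mem_DSet_eampDet, san, Set.mem_ofPred_eq]
  constructor
  · rintro (h | ⟨ha, v, hv, hav⟩)
    · exact Or.inl h
    obtain ⟨b, rfl, hab⟩ := eamp_transGen_dir_inl hav
    exact Or.inr ⟨ha, b, inl_mem_DSet_eampDet.1 hv, hab⟩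
  · rintro (h | ⟨ha, b, hb, hab⟩)
    · exact Or.inl h
    exact Or.inr ⟨ha, inl b, inl_mem_DSet_eampDet.2 hb,
      TransGen.lift inl (fun _ _ h => eamp_dir_inl_inl.2 h) _ _ hab⟩

theorem eamp_tripleOpen_of_inr_notMem {D : Set (α ⊕ α)} {u w : α ⊕ α} {b : α}
    (hb : inr b ∉ D) : (eamp G).TripleOpen D u (inr b) w :=
  tripleOpen_of_not_triplex_of_notMem (by simp [triplex]) hb

variable {a b c : α}

theorem eamp_tripleOpen_inl_inl_inl_iff (hab : ¬ G.undir a b) (hbc : ¬ G.undir b c) :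
    (eamp G).TripleOpen (DSet (eampDet G) (inl '' Z)) (inl a) (inl b) (inl c) ↔
      G.TripleOpen Z a b c := by
  simp only [TripleOpen, triplex, nontriplex, adj, eamp_dir_inl_inl, eamp_not_undir_inl_left,
    inl_mem_union_san_eamp, inl_mem_DSet_eampDet, and_false, or_false, false_and]
  grind

theorem eamp_tripleOpen_inl_inl_inr_iff (hS : G.Simple) (hab : ¬ G.undir a b)
    (hbc : G.undir b c) :
    (eamp G).TripleOpen (DSet (eampDet G) (inl '' Z)) (inl a) (inl b) (inr b) ↔
      G.TripleOpen Z a b c := by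
  have := hS.not_dir_of_undir hbc
  simp only [TripleOpen, triplex, nontriplex, adj, eamp_dir_inl_inl, eamp_not_undir_inl_left,
    eamp_dir_inr_inl, eamp_not_dir_inr, inl_mem_union_san_eamp, inl_mem_DSet_eampDet,
    and_false, or_false, false_and, and_true, or_true]
  grind

/-- An undirected non-collider `b ∈ Z` needs a parent outside `Z`; in `G'` this is the statement
that `ε^b` is not determined. -/
theorem tripleOpen_of_eamp_inr_inr_inr (hS : G.Simple)
    (h : (eamp G).TripleOpen (DSet (eampDet G) (inl '' Z)) (inr a) (inr b) (inr c))
    (hab : G.undir a b) (hbc : G.undir b c) : G.TripleOpen Z a b c := by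
  refine ⟨?_, fun _ hb => ⟨hab, hbc, ?_⟩⟩
  · rintro (⟨h₁, -⟩ | ⟨h₁, -⟩ | ⟨-, h₂⟩)
    exacts [((hS.not_dir_of_undir hab).1 h₁).elim, ((hS.not_dir_of_undir hab).1 h₁).elim,
      ((hS.not_dir_of_undir hbc).2 h₂).elim]
  by_contra! hpa
  have hbD : inr b ∈ DSet (eampDet G) (inl '' Z) := inr_mem_DSet_eampDet.2
    ⟨hb, fun p hp => hpa p ⟨fun hpb => hS.1 b (by rwa [hpb] at hp), b, rfl, hp⟩⟩
  obtain ⟨-, -, p, ⟨-, x, hx, hpx⟩, -⟩ :=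
    h.2 ⟨Or.inr (Or.inr hab), Or.inr (Or.inr hbc), by simp [triplex]⟩ hbD
  rw [Set.mem_singleton_iff.1 hx] at hpx
  exact eamp_not_dir_inr _ _ hpx

end EAMP

section Collapse

open MixedGraph Sum

variable {α : Type*} {G : MixedGraph α} {Z : Set α}

def vertexOf : α ⊕ α → α := Sum.elim id id

@[simp] theorem vertexOf_inl (a : α) : vertexOf (inl a : α ⊕ α) = a := rfl
@[simp] theorem vertexOf_inr (a : α) : vertexOf (inr a : α ⊕ α) = a := rfl

theorem not_nodup_of_vertexOf_eq {u v w : α ⊕ α} (h₁ : vertexOf u = vertexOf v)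
    (h₂ : vertexOf v = vertexOf w) : ¬ [u, v, w].Nodup := by
  rcases u with a | a <;> rcases v with b | b <;> rcases w with c | c <;> simp_all

open scoped Classical in
noncomputable def collapse : List (α ⊕ α) → List α
  | [] => []
  | [v] => [vertexOf v]
  | u :: v :: t =>
      if vertexOf u = vertexOf v then collapse (v :: t) else vertexOf u :: collapse (v :: t)

open scoped Classical in
theorem collapse_cons_cons (u v : α ⊕ α) (t : List (α ⊕ α)) :
    collapse (u :: v :: t) =
      if vertexOf u = vertexOf v then collapse (v :: t) else vertexOf u :: collapse (v :: t) := by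
  rw [collapse]

theorem head?_collapse (v : α ⊕ α) (t : List (α ⊕ α)) :
    (collapse (v :: t)).head? = some (vertexOf v) := by
  induction t generalizing v with
  | nil => rfl
  | cons w t ih =>
    rw [collapse_cons_cons]
    split_ifs with h
    · rw [ih, h]
    · rfl

theorem getLast?_collapse (l : List (α ⊕ α)) :
    (collapse l).getLast? = l.getLast?.map vertexOf := by
  induction l with
  | nil => rfl
  | cons u t ih =>
    rcases t with _ | ⟨v, t⟩
    · rfl
    rw [collapse_cons_cons, List.getLast?_cons_cons]
    split_ifs
    · exact ih
    · have hne : collapse (v :: t) ≠ [] := fun h => by simpa [h] using head?_collapse v t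
      obtain ⟨b, M, hb⟩ := List.exists_cons_of_ne_nil hne
      rw [hb, List.getLast?_cons_cons, ← hb, ih]

theorem prefix_collapse_two {v : α ⊕ α} {t : List (α ⊕ α)} (hnd : (v :: t).Nodup) {B C : α}
    (h : [B, C] <+: collapse (v :: t)) :
    vertexOf v = B ∧ B ≠ C ∧ ∃ w, vertexOf w = C ∧
      ([v, w] <+: v :: t ∨ ∃ v', vertexOf v' = B ∧ [v, v', w] <+: v :: t) := by
  obtain ⟨rest, hrest⟩ := h
  rcases t with _ | ⟨w, t⟩
  · simpa [collapse] using congrArg List.length hrest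
  rw [collapse_cons_cons] at hrest
  split_ifs at hrest with hvw
  · rcases t with _ | ⟨x, t⟩
    · simpa [collapse] using congrArg List.length hrest
    have hwx : vertexOf w ≠ vertexOf x := fun hwx =>
      not_nodup_of_vertexOf_eq hvw hwx (hnd.sublist (by simp))
    rw [collapse_cons_cons, if_neg hwx] at hrest
    obtain ⟨rfl, hC⟩ := List.cons_eq_cons.1 hrest
    have hC := congrArg List.head? hC
    rw [head?_collapse] at hC
    obtain rfl : C = vertexOf x := by simpa using hC
    exact ⟨hvw, hwx, x, rfl, Or.inr ⟨w, rfl, by simp⟩⟩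
  · obtain ⟨rfl, hC⟩ := List.cons_eq_cons.1 hrest
    have hC := congrArg List.head? hC
    rw [head?_collapse] at hC
    obtain rfl : C = vertexOf w := by simpa using hC
    exact ⟨rfl, hvw, w, rfl, Or.inl (by simp)⟩

/-- In a list without repetitions, a run of nodes with the same `vertexOf` has length at most
two, so a triple of `collapse l` comes from three or four consecutive nodes of `l`. -/
theorem exists_window_of_infix_collapse {L l : List (α ⊕ α)} (hnd : L.Nodup) (hl : l <:+: L)
    {A B C : α} (h : [A, B, C] <:+: collapse l) :
    A ≠ B ∧ B ≠ C ∧ ∃ u v w, vertexOf u = A ∧ vertexOf v = B ∧ vertexOf w = C ∧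
      ([u, v, w] <:+: L ∨ ∃ v', vertexOf v' = B ∧ [u, v, v', w] <:+: L) := by
  induction l with
  | nil => simp [collapse] at h
  | cons u t ih =>
    rcases t with _ | ⟨v, t⟩
    · simpa [collapse] using h.length_le
    have ih := ih ((List.suffix_cons u _).isInfix.trans hl)
    rw [collapse_cons_cons] at h
    split_ifs at h with huv
    · exact ih h
    rcases List.infix_cons_iff.1 h with h | h
    · obtain ⟨rfl, hBC⟩ := List.cons_prefix_cons.1 h
      obtain ⟨rfl, hBC, w, rfl, hw | ⟨v', hv', hw⟩⟩ :=
        prefix_collapse_two ((hnd.sublist hl.sublist).sublist (List.sublist_cons_self u _)) hBC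
      · exact ⟨huv, hBC, u, v, w, rfl, rfl, rfl,
          Or.inl ((List.cons_prefix_cons.2 ⟨rfl, hw⟩).isInfix.trans hl)⟩
      · exact ⟨huv, hBC, u, v, w, rfl, rfl, rfl,
          Or.inr ⟨v', hv', (List.cons_prefix_cons.2 ⟨rfl, hw⟩).isInfix.trans hl⟩⟩
    · exact ih h

theorem exists_eq_inl_of_eamp_adj {u : α ⊕ α} {b : α} (h : (eamp G).adj u (inl b))
    (hne : vertexOf u ≠ b) : ∃ a, u = inl a ∧ (G.dir a b ∨ G.dir b a) := by
  rcases u with a | a <;> simp_all [adj, eq_comm]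

theorem exists_eq_inr_of_eamp_adj {u : α ⊕ α} {b : α} (h : (eamp G).adj u (inr b))
    (hne : vertexOf u ≠ b) : ∃ a, u = inr a ∧ G.undir a b := by
  rcases u with a | a <;> simp_all [adj]

theorem adj_vertexOf_of_eamp_adj {u v : α ⊕ α} (h : (eamp G).adj u v)
    (hne : vertexOf u ≠ vertexOf v) : G.adj (vertexOf u) (vertexOf v) := by
  rcases v with b | b
  · obtain ⟨a, rfl, hd | hd⟩ := exists_eq_inl_of_eamp_adj h hne
    exacts [Or.inl hd, Or.inr (Or.inl hd)]
  · obtain ⟨a, rfl, hd⟩ := exists_eq_inr_of_eamp_adj h hne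
    exact Or.inr (Or.inr hd)

theorem isChain_collapse {l : List (α ⊕ α)} (hl : l.IsChain (eamp G).adj) :
    (collapse l).IsChain G.adj := by
  induction l with
  | nil => exact List.isChain_nil
  | cons u t ih =>
    rcases t with _ | ⟨v, t⟩
    · exact List.isChain_singleton _
    obtain ⟨huv, hl⟩ := List.isChain_cons_cons.1 hl
    rw [collapse_cons_cons]
    split_ifs with h
    · exact ih hl
    refine List.isChain_cons.2 ⟨fun y hy => ?_, ih hl⟩
    obtain rfl : vertexOf v = y := by simpa [head?_collapse] using hy
    exact adj_vertexOf_of_eamp_adj huv h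

theorem tripleOpen_vertexOf_of_eamp (hS : G.Simple) {u v w : α ⊕ α}
    (h : (eamp G).TripleOpen (DSet (eampDet G) (inl '' Z)) u v w)
    (huv : (eamp G).adj u v) (hvw : (eamp G).adj v w)
    (hne₁ : vertexOf u ≠ vertexOf v) (hne₂ : vertexOf v ≠ vertexOf w) :
    G.TripleOpen Z (vertexOf u) (vertexOf v) (vertexOf w) := by
  rcases v with b | b
  · obtain ⟨a, rfl, hab⟩ := exists_eq_inl_of_eamp_adj huv hne₁
    obtain ⟨c, rfl, hcb⟩ := exists_eq_inl_of_eamp_adj hvw.symm hne₂.symm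
    exact (eamp_tripleOpen_inl_inl_inl_iff (hS.not_undir_of_dir hab)
      (hS.not_undir_of_dir hcb.symm)).1 h
  · obtain ⟨a, rfl, hab⟩ := exists_eq_inr_of_eamp_adj huv hne₁
    obtain ⟨c, rfl, hcb⟩ := exists_eq_inr_of_eamp_adj hvw.symm hne₂.symm
    exact tripleOpen_of_eamp_inr_inr_inr hS h hab (G.undir_symm _ _ hcb)

theorem tripleOpen_vertexOf_of_eamp₄ (hS : G.Simple) {u v v' w : α ⊕ α}
    (h₁ : (eamp G).TripleOpen (DSet (eampDet G) (inl '' Z)) u v v')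
    (h₂ : (eamp G).TripleOpen (DSet (eampDet G) (inl '' Z)) v v' w)
    (huv : (eamp G).adj u v) (hvw : (eamp G).adj v' w) (hv : vertexOf v' = vertexOf v)
    (hvv' : v ≠ v') (hne₁ : vertexOf u ≠ vertexOf v) (hne₂ : vertexOf v ≠ vertexOf w) :
    G.TripleOpen Z (vertexOf u) (vertexOf v) (vertexOf w) := by
  rcases v with b | b <;> rcases v' with b' | b' <;>
    simp only [vertexOf_inl, vertexOf_inr] at hv <;> subst b'
  · exact absurd rfl hvv'
  · obtain ⟨a, rfl, hab⟩ := exists_eq_inl_of_eamp_adj huv hne₁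
    obtain ⟨c, rfl, hcb⟩ := exists_eq_inr_of_eamp_adj hvw.symm hne₂.symm
    exact (eamp_tripleOpen_inl_inl_inr_iff hS (hS.not_undir_of_dir hab)
      (G.undir_symm _ _ hcb)).1 h₁
  · obtain ⟨a, rfl, hab⟩ := exists_eq_inr_of_eamp_adj huv hne₁
    obtain ⟨c, rfl, hcb⟩ := exists_eq_inl_of_eamp_adj hvw.symm hne₂.symm
    exact ((eamp_tripleOpen_inl_inl_inr_iff hS (hS.not_undir_of_dir hcb)
      (G.undir_symm _ _ hab)).1 h₂.symm).symm
  · exact absurd rfl hvv'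

theorem MixedGraph.OpenWalk.collapse (hS : G.Simple) {l : List (α ⊕ α)} (hnd : l.Nodup)
    (hw : (eamp G).OpenWalk (DSet (eampDet G) (inl '' Z)) l) :
    G.OpenWalk Z (collapse l) := by
  refine ⟨isChain_collapse hw.1, fun A B C hABC => ?_⟩
  obtain ⟨hAB, hBC, u, v, w, rfl, rfl, rfl, h3 | ⟨v', hv', h4⟩⟩ :=
    exists_window_of_infix_collapse hnd List.infix_rfl hABC
  · exact tripleOpen_vertexOf_of_eamp hS (hw.2 _ _ _ h3) (hw.adj₃ h3).1 (hw.adj₃ h3).2 hAB hBC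
  have h3l : [u, v, v'] <:+: l := List.IsInfix.trans ⟨[], [w], rfl⟩ h4
  have h3r : [v, v', w] <:+: l := List.IsInfix.trans ⟨[u], [], rfl⟩ h4
  have hvv' : v ≠ v' := by
    simpa using hnd.sublist (List.IsInfix.trans (l₁ := [v, v']) ⟨[], [w], rfl⟩ h3r).sublist
  exact tripleOpen_vertexOf_of_eamp₄ hS (hw.2 _ _ _ h3l) (hw.2 _ _ _ h3r) (hw.adj₃ h3l).1
    (hw.adj₃ h3r).2 hv' hvv' hAB hBC

theorem MixedGraph.AMPOpenPath.collapse (hG : G.IsChainGraph) {l : List (α ⊕ α)}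
    (hl : (eamp G).AMPOpenPath (DSet (eampDet G) (inl '' Z)) l) :
    ∃ l', G.AMPOpenPath Z l' ∧ l'.head? = l.head?.map vertexOf ∧
      l'.getLast? = l.getLast?.map vertexOf := by
  obtain ⟨hne, hnd, hw⟩ := ampOpenPath_iff.1 hl
  obtain ⟨v, t, rfl⟩ := List.exists_cons_of_ne_nil hne
  obtain ⟨l', hnd', hw', hh, hlast⟩ := (hw.collapse hG.1 hnd).exists_nodup hG
  refine ⟨l', ampOpenPath_iff.2 ⟨fun h => ?_, hnd', hw'⟩, ?_, ?_⟩
  · simp [h, head?_collapse] at hh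
  · rw [hh, head?_collapse, List.head?_cons, Option.map_some]
  · rw [hlast, getLast?_collapse]

end Collapse

section Lift

open MixedGraph Sum

variable {α : Type*} {G : MixedGraph α} {Z : Set α}

open scoped Classical in
/-- Lifts a route of `G` to `G'`, replacing each undirected edge `a − b` by `ε^a − ε^b`, which is
entered and left through the edges `ε^a → a` and `ε^b → b`. The flag records whether the edge
entering the current node is undirected. -/
noncomputable def liftRoute (G : MixedGraph α) : Bool → List α → List (α ⊕ α)
  | _, [] => []
  | false, [a] => [inl a]
  | true, [a] => [inr a, inl a]
  | false, a :: b :: t =>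
      if G.undir a b then inl a :: inr a :: liftRoute G true (b :: t)
      else inl a :: liftRoute G false (b :: t)
  | true, a :: b :: t =>
      if G.undir a b then inr a :: liftRoute G true (b :: t)
      else inr a :: inl a :: liftRoute G false (b :: t)

theorem exists_liftRoute_eq_cons (f : Bool) (a : α) (t : List α) :
    ∃ rest, liftRoute G f (a :: t) = (if f then inr a else inl a) :: rest := by
  rcases t with _ | ⟨b, t⟩
  · cases f
    exacts [⟨[], rfl⟩, ⟨[inl a], rfl⟩]
  · cases f <;> rw [liftRoute] <;> split_ifs <;> simp_all

theorem getLast?_liftRoute (f : Bool) (a : α) (t : List α) :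
    (liftRoute G f (a :: t)).getLast? = (a :: t).getLast?.map inl := by
  induction t generalizing a f with
  | nil => cases f <;> rfl
  | cons b t ih =>
    cases f <;> rw [liftRoute] <;> split_ifs <;> simp [List.getLast?_cons, ih]

theorem vertexOf_mem_of_mem_liftRoute {f : Bool} {l : List α} {x : α ⊕ α}
    (h : x ∈ liftRoute G f l) : vertexOf x ∈ l := by
  induction l generalizing f with
  | nil => cases f <;> simp [liftRoute] at h
  | cons a t ih =>
    rcases t with _ | ⟨b, t⟩
    · cases f <;> simp [liftRoute] at h <;> rcases h with rfl | rfl <;> simp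
    have hx : x = inl a ∨ x = inr a ∨ ∃ g, x ∈ liftRoute G g (b :: t) := by
      cases f <;> rw [liftRoute] at h <;> split_ifs at h <;> simp only [List.mem_cons] at h <;>
        aesop
    rcases hx with rfl | rfl | ⟨g, hg⟩
    · simp
    · simp
    · exact List.mem_cons_of_mem _ (ih hg)

theorem nodup_liftRoute {f : Bool} {l : List α} (hl : l.Nodup) : (liftRoute G f l).Nodup := by
  induction l generalizing f with
  | nil => cases f <;> simp [liftRoute]
  | cons a t ih =>
    have hnot : ∀ g, ∀ x ∈ liftRoute G g t, vertexOf x ≠ a := fun g x hx hxa =>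
      (List.nodup_cons.1 hl).1 (hxa ▸ vertexOf_mem_of_mem_liftRoute hx)
    have ih := fun g => ih (f := g) (List.nodup_cons.1 hl).2
    rcases t with _ | ⟨b, t⟩
    · cases f <;> simp [liftRoute]
    · cases f <;> rw [liftRoute] <;> split_ifs <;>
        simp only [List.nodup_cons, List.mem_cons, ih, and_true, not_or] <;>
        grind [vertexOf_inl, vertexOf_inr]

theorem eamp_adj_inl_inl {a b : α} (h : G.adj a b) (hu : ¬ G.undir a b) :
    (eamp G).adj (inl a) (inl b) := by
  rcases h with h | h | h
  exacts [Or.inl h, Or.inr (Or.inl h), (hu h).elim]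

theorem isChain_liftRoute {f : Bool} {a : α} {t : List α} (hl : (a :: t).IsChain G.adj) :
    (liftRoute G f (a :: t)).IsChain (eamp G).adj := by
  induction t generalizing a f with
  | nil =>
    cases f
    · exact List.isChain_singleton _
    · exact List.IsChain.cons_cons (Or.inl rfl) (List.isChain_singleton _)
  | cons b t ih =>
    obtain ⟨hab, hl⟩ := List.isChain_cons_cons.1 hl
    obtain ⟨r₁, h₁⟩ := exists_liftRoute_eq_cons (G := G) true b t
    obtain ⟨r₂, h₂⟩ := exists_liftRoute_eq_cons (G := G) false b t
    have ih₁ := ih (f := true) hl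
    have ih₂ := ih (f := false) hl
    simp only [h₁, h₂, Bool.false_eq_true, ↓reduceIte] at ih₁ ih₂
    cases f <;> rw [liftRoute] <;> split_ifs with hu <;>
      simp only [h₁, h₂, Bool.false_eq_true, ↓reduceIte]
    · exact .cons_cons (Or.inr (Or.inl rfl)) (.cons_cons (Or.inr (Or.inr hu)) ih₁)
    · exact .cons_cons (eamp_adj_inl_inl hab hu) ih₂
    · exact .cons_cons (Or.inr (Or.inr hu)) ih₁
    · exact .cons_cons (Or.inl rfl) (.cons_cons (eamp_adj_inl_inl hab hu) ih₂)

namespace MixedGraph.OpenWalk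

variable {l : List α}

theorem notMem_of_dir_of_infix (hS : G.Simple) (hw : G.OpenWalk Z l)
    (hx : ∀ v ∈ l.head?, v ∉ Z) {a b : α} (h : [a, b] <:+: l) (hab : G.dir a b) : a ∉ Z := by
  rcases List.head?_eq_or_exists_infix_cons h with h | ⟨w, h⟩
  exacts [hx a h, hw.notMem_of_dir_out hS h (Or.inr hab)]

/-- If `ε^a` were determined, `a` and its parents would lie in `Z`, so `a` is not the first node;
but the edge of the walk before `a` either leaves `a`, or comes from a parent, which is not in `Z`
as it has an outgoing edge on the walk, or is undirected, and then the open walk provides a parent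
of `a` outside `Z`. -/
theorem inr_notMem_of_undir (hS : G.Simple) (hw : G.OpenWalk Z l)
    (hx : ∀ v ∈ l.head?, v ∉ Z) {a b : α} (h : [a, b] <:+: l) (hab : G.undir a b) :
    inr a ∉ DSet (eampDet G) (inl '' Z) := by
  rw [inr_mem_DSet_eampDet]
  rintro ⟨haZ, hpa⟩
  rcases List.head?_eq_or_exists_infix_cons h with h' | ⟨w, h3⟩
  · exact hx a h' haZ
  rcases (hw.adj₃ h3).1 with hwa | haw | hwa
  · exact hw.notMem_of_dir_of_infix hS hx (List.IsInfix.trans ⟨[], [b], rfl⟩ h3) hwa (hpa w hwa)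
  · exact hw.notMem_of_dir_out hS h3 (Or.inl haw) haZ
  · have hnt : G.nontriplex w a b := ⟨(hw.adj₃ h3).1, (hw.adj₃ h3).2, by
      rintro (⟨h₁, -⟩ | ⟨h₁, -⟩ | ⟨-, h₂⟩)
      exacts [(hS.not_dir_of_undir hwa).1 h₁, (hS.not_dir_of_undir hwa).1 h₁,
        (hS.not_dir_of_undir hab).2 h₂]⟩
    obtain ⟨-, -, p, ⟨-, x, hx, hpx⟩, hp⟩ := (hw.2 w a b h3).2 hnt haZ
    rw [Set.mem_singleton_iff.1 hx] at hpx
    exact hp (hpa p hpx)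

theorem inr_notMem_of_undir' (hS : G.Simple) (hw : G.OpenWalk Z l)
    (hy : ∀ v ∈ l.getLast?, v ∉ Z) {a b : α} (h : [a, b] <:+: l) (hab : G.undir a b) :
    inr b ∉ DSet (eampDet G) (inl '' Z) :=
  hw.reverse.inr_notMem_of_undir hS (by simpa using hy) (by simpa using List.reverse_infix.2 h)
    (G.undir_symm _ _ hab)

/-- `if f then inr w else inl w` is the node of `G'` just before the lift of `a`. -/
theorem triplesOpen_cons_liftRoute (hS : G.Simple) (hw : G.OpenWalk Z l)
    (hx : ∀ v ∈ l.head?, v ∉ Z) (hy : ∀ v ∈ l.getLast?, v ∉ Z) (t : List α) :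
    ∀ (a : α) (f : Bool) (pre : List α) (w : α), l = pre ++ w :: a :: t →
      (f = true ↔ G.undir w a) →
      (eamp G).TriplesOpen (DSet (eampDet G) (inl '' Z))
        ((if f then inr w else inl w) :: liftRoute G f (a :: t)) := by
  induction t with
  | nil =>
    intro a f pre w hl hf
    cases f
    · exact triplesOpen_of_length_le_two (by simp [liftRoute])
    · refine triplesOpen_cons_cons_cons.2 ⟨eamp_tripleOpen_of_inr_notMem ?_,
        triplesOpen_of_length_le_two (by simp)⟩
      exact hw.inr_notMem_of_undir' hS hy ⟨pre, [], by simp [hl]⟩ (hf.1 rfl)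
  | cons b t ih =>
    intro a f pre w hl hf
    have h3 : [w, a, b] <:+: l := ⟨pre, t, by simp [hl]⟩
    have hab : [a, b] <:+: l := List.IsInfix.trans ⟨[w], [], rfl⟩ h3
    have hl' : l = (pre ++ [w]) ++ a :: b :: t := by simp [hl]
    obtain ⟨r₁, h₁⟩ := exists_liftRoute_eq_cons (G := G) true b t
    obtain ⟨r₂, h₂⟩ := exists_liftRoute_eq_cons (G := G) false b t
    have ih₁ := ih b true (pre ++ [w]) a hl'
    have ih₂ := ih b false (pre ++ [w]) a hl'
    simp only [h₁, h₂, Bool.false_eq_true, ↓reduceIte] at ih₁ ih₂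
    cases f <;> rw [liftRoute] <;> simp only [Bool.false_eq_true, ↓reduceIte, false_iff] at hf ⊢ <;>
      split_ifs with hu <;>
      simp only [h₁, h₂, Bool.false_eq_true, ↓reduceIte, triplesOpen_cons_cons_cons]
    · exact ⟨(eamp_tripleOpen_inl_inl_inr_iff hS hf hu).2 (hw.2 w a b h3),
        eamp_tripleOpen_of_inr_notMem (hw.inr_notMem_of_undir hS hx hab hu),
        ih₁ (iff_of_true trivial hu)⟩
    · exact ⟨(eamp_tripleOpen_inl_inl_inl_iff hf hu).2 (hw.2 w a b h3), ih₂ (iff_of_false id hu)⟩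
    · exact ⟨eamp_tripleOpen_of_inr_notMem (hw.inr_notMem_of_undir hS hx hab hu),
        ih₁ (iff_of_true trivial hu)⟩
    · have hwa := hf.1 trivial
      exact ⟨eamp_tripleOpen_of_inr_notMem
          (hw.inr_notMem_of_undir' hS hy (List.IsInfix.trans ⟨[], [b], rfl⟩ h3) hwa),
        ((eamp_tripleOpen_inl_inl_inr_iff hS (fun h => hu (G.undir_symm _ _ h))
          (G.undir_symm _ _ hwa)).2 (hw.2 w a b h3).symm).symm,
        ih₂ (iff_of_false id hu)⟩

theorem lift (hS : G.Simple) {a : α} {t : List α} (hw : G.OpenWalk Z (a :: t))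
    (hx : ∀ v ∈ (a :: t).head?, v ∉ Z) (hy : ∀ v ∈ (a :: t).getLast?, v ∉ Z) :
    (eamp G).OpenWalk (DSet (eampDet G) (inl '' Z)) (liftRoute G false (a :: t)) := by
  refine ⟨isChain_liftRoute hw.1, ?_⟩
  rcases t with _ | ⟨b, t⟩
  · exact triplesOpen_of_length_le_two (by simp [liftRoute])
  have h := hw.triplesOpen_cons_liftRoute hS hx hy t b
  rw [liftRoute]
  split_ifs with hu
  · obtain ⟨r, hr⟩ := exists_liftRoute_eq_cons (G := G) true b t
    have h := h true [] a rfl (iff_of_true rfl hu)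
    simp only [hr, ↓reduceIte] at h ⊢
    exact triplesOpen_cons_cons_cons.2 ⟨eamp_tripleOpen_of_inr_notMem
      (hw.inr_notMem_of_undir hS hx ⟨[], t, rfl⟩ hu), h⟩
  · simpa using h false [] a rfl (iff_of_false Bool.false_ne_true hu)

end MixedGraph.OpenWalk

theorem MixedGraph.AMPOpenPath.lift (hS : G.Simple) {l : List α} (hl : G.AMPOpenPath Z l)
    (hx : ∀ v ∈ l.head?, v ∉ Z) (hy : ∀ v ∈ l.getLast?, v ∉ Z) :
    ∃ l', (eamp G).AMPOpenPath (DSet (eampDet G) (inl '' Z)) l' ∧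
      l'.head? = l.head?.map inl ∧ l'.getLast? = l.getLast?.map inl := by
  obtain ⟨hne, hnd, hw⟩ := ampOpenPath_iff.1 hl
  obtain ⟨a, t, rfl⟩ := List.exists_cons_of_ne_nil hne
  obtain ⟨rest, hrest⟩ := exists_liftRoute_eq_cons (G := G) false a t
  refine ⟨_, ampOpenPath_iff.2 ⟨?_, nodup_liftRoute hnd, hw.lift hS hx hy⟩, ?_,
    getLast?_liftRoute false a t⟩ <;> simp [hrest]

end Lift

open MixedGraph Sum in
theorem stmt6_general {α : Type*} (G : MixedGraph α) (hG : G.IsChainGraph)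
    (X Y Z : Set α) (hXZ : Disjoint X Z) (hYZ : Disjoint Y Z) :
    G.AMPSep Z X Y ↔
      (eamp G).AMPSep (MixedGraph.DSet (eampDet G) (Sum.inl '' Z))
        (Sum.inl '' X) (Sum.inl '' Y) := by
  constructor
  · rintro hsep l _ _ ⟨x, hxX, rfl⟩ ⟨y, hyY, rfl⟩ hhead hlast hopen
    obtain ⟨l', hl', hh, hl⟩ := hopen.collapse hG
    exact hsep l' x y hxX hyY (by simp [hh, hhead]) (by simp [hl, hlast]) hl'
  · intro hsep l x y hxX hyY hhead hlast hopen
    obtain ⟨l', hl', hh, hl⟩ := hopen.lift hG.1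
      (by simpa [hhead] using hXZ.notMem_of_mem_left hxX)
      (by simpa [hlast] using hYZ.notMem_of_mem_left hyY)
    exact hsep l' (inl x) (inl y) ⟨x, hxX, rfl⟩ ⟨y, hyY, rfl⟩ (by simp [hh, hhead])
      (by simp [hl, hlast]) hl'

/-- Theorem 1: `I_AMP(G) = [I_AMP(G')]_ε`: for all disjoint
`X, Y, Z ⊆ V`, X is AMP-separated from Y given Z in G iff X is AMP-separated
from Y given Z in the EAMP CG G' with its deterministic nodes. -/
theorem stmt6 {α : Type*} (G : MixedGraph α) (hG : G.IsChainGraph)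
    (X Y Z : Set α) (hXY : Disjoint X Y) (hXZ : Disjoint X Z) (hYZ : Disjoint Y Z) :
    G.AMPSep Z X Y ↔
      (eamp G).AMPSep (MixedGraph.DSet (eampDet G) (Sum.inl '' Z))
        (Sum.inl '' X) (Sum.inl '' Y) :=
  stmt6_general G hG X Y Z hXZ hYZ
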